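/- Let r ∈ (1, ∞) and let f : 𝒜 → 𝒜 be a mapping with f(0) = 0. Suppose there exists a function φ : 𝒜 × 𝒜 × 𝒜 → [0, ∞) such that the series Σ_{n=0}^∞ r^{−n} φ(r^n a, r^n b, r^n c) converges for all a, b, c ∈ 𝒜, and ‖r μ f((a+b)/r) + r μ f((a−b)/r) − 2 f(μ a) + f(c c* c) − f(c) c* c − c (f(c))* c − c c* f(c)‖ ≤ φ(a, b, c) for all μ ∈ 𝕋 and all a, b, c ∈ 𝒜. Then there exists a unique J*-derivation D : 𝒜 → 𝒜 such that ‖f(a) − D(a)‖ ≤ (1/2) Σ_{n=1}^∞ r^{−n} φ(r^n a, 0, 0) for all a ∈ 𝒜; moreover D(a) = lim_{n→∞} r^{−n} f(r^n a) for every a ∈ 𝒜. -/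

import Mathlib

/-!
Hyers' direct method. The Jensen part of the inequality with `μ = 1`, `b = c = 0` gives
`‖r f(a) - f(r a)‖ ≤ φ(r a, 0, 0) / 2`, so `r⁻ⁿ f(rⁿ a)` is Cauchy, with the stated distance from
`f` to its limit `D`; the tails of the series force uniqueness among maps commuting with `rⁿ`.
Rescaling the Jensen part and letting `n → ∞` gives `μ D(a+b) + μ D(a-b) = 2 D(μ a)` for all unimodular
`μ`, hence `ℂ`-linearity, because every complex number is a natural multiple of a sum of two unimodular
ones. Finally `(rⁿc)(rⁿc)*(rⁿc) = r³ⁿ c c* c`, so multiplying the derivation part at `rⁿ c` by `r⁻³ⁿ`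
compares `r⁻³ⁿ f(r³ⁿ c c* c)` with the Leibniz expression in `r⁻ⁿ f(rⁿ c)`, and the limit is the
`J*`-derivation identity.
-/

open ContinuousLinearMap Filter

variable {H K : Type*} [NormedAddCommGroup H] [InnerProductSpace ℂ H] [CompleteSpace H]
  [NormedAddCommGroup K] [InnerProductSpace ℂ K] [CompleteSpace K]

/-- `𝒜` is closed under the `J*`-triple product `x ↦ x x* x`. -/
def JStarClosed (𝒜 : Submodule ℂ (H →L[ℂ] K)) : Prop :=
  ∀ x : H →L[ℂ] K, x ∈ 𝒜 → (x ∘L adjoint x) ∘L x ∈ 𝒜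

/-- The triple product `c c* c` as an element of `𝒜`. -/
noncomputable def cube (𝒜 : Submodule ℂ (H →L[ℂ] K)) (hA : JStarClosed 𝒜) (c : 𝒜) : 𝒜 :=
  ⟨((c : H →L[ℂ] K) ∘L adjoint (c : H →L[ℂ] K)) ∘L (c : H →L[ℂ] K), hA c c.2⟩

/-- `D : 𝒜 → 𝒜` is a `J*`-derivation: it is `ℂ`-linear and satisfies
`D(c c* c) = D(c) c* c + c (D(c))* c + c c* D(c)`. -/
noncomputable def IsJStarDerivation (𝒜 : Submodule ℂ (H →L[ℂ] K)) (hA : JStarClosed 𝒜)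
    (D : 𝒜 → 𝒜) : Prop :=
  (∀ a b : 𝒜, D (a + b) = D a + D b) ∧
  (∀ (z : ℂ) (a : 𝒜), D (z • a) = z • D a) ∧
  (∀ c : 𝒜, (D (cube 𝒜 hA c) : H →L[ℂ] K) =
      ((D c : H →L[ℂ] K) ∘L adjoint (c : H →L[ℂ] K)) ∘L (c : H →L[ℂ] K) +
      ((c : H →L[ℂ] K) ∘L adjoint (D c : H →L[ℂ] K)) ∘L (c : H →L[ℂ] K) +
      ((c : H →L[ℂ] K) ∘L adjoint (c : H →L[ℂ] K)) ∘L (D c : H →L[ℂ] K))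

/-- The defect of the generalized Jensen functional equation combined with the
`J*`-derivation identity, for a map `f : 𝒜 → 𝒜`, parameter `r` and scalar `μ`. -/
noncomputable def jensenDefect (𝒜 : Submodule ℂ (H →L[ℂ] K)) (hA : JStarClosed 𝒜)
    (r : ℝ) (f : 𝒜 → 𝒜) (μ : ℂ) (a b c : 𝒜) : H →L[ℂ] K :=
  ((r : ℂ) * μ) • (f ((r : ℂ)⁻¹ • (a + b)) : H →L[ℂ] K) +
  ((r : ℂ) * μ) • (f ((r : ℂ)⁻¹ • (a - b)) : H →L[ℂ] K) -
  (2 : ℂ) • (f (μ • a) : H →L[ℂ] K) +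
  (f (cube 𝒜 hA c) : H →L[ℂ] K) -
  ((f c : H →L[ℂ] K) ∘L adjoint (c : H →L[ℂ] K)) ∘L (c : H →L[ℂ] K) -
  ((c : H →L[ℂ] K) ∘L adjoint (f c : H →L[ℂ] K)) ∘L (c : H →L[ℂ] K) -
  ((c : H →L[ℂ] K) ∘L adjoint (c : H →L[ℂ] K)) ∘L (f c : H →L[ℂ] K)

open scoped Topology

section Hyers

variable {𝕜 E : Type*} [NormedField 𝕜] [NormedAddCommGroup E] [NormedSpace 𝕜 E]

def hyersSeq (c : 𝕜) (f : E → E) (n : ℕ) (a : E) : E := (c ^ n)⁻¹ • f (c ^ n • a)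

lemma hyersSeq_zero (c : 𝕜) (f : E → E) : hyersSeq c f 0 = f := by
  funext a
  simp [hyersSeq]

lemma hyersSeq_sub_hyersSeq_succ {c : 𝕜} (hc : c ≠ 0) (f : E → E) (n : ℕ) (a : E) :
    hyersSeq c f n a - hyersSeq c f (n + 1) a =
      (c ^ (n + 1))⁻¹ • (c • f (c ^ n • a) - f (c ^ (n + 1) • a)) := by
  simp only [hyersSeq]
  rw [smul_sub, smul_smul, pow_succ, mul_inv, inv_mul_cancel_right₀ hc]

lemma dist_hyersSeq_succ_le {c : 𝕜} (hc : c ≠ 0) {f : E → E} {δ : E → ℝ}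
    (hδ : ∀ a, ‖c • f a - f (c • a)‖ ≤ δ (c • a)) (n : ℕ) (a : E) :
    dist (hyersSeq c f n a) (hyersSeq c f (n + 1) a) ≤ ‖c ^ (n + 1)‖⁻¹ * δ (c ^ (n + 1) • a) := by
  rw [dist_eq_norm, hyersSeq_sub_hyersSeq_succ hc, norm_smul, norm_inv, pow_succ', mul_smul]
  exact mul_le_mul_of_nonneg_left (hδ _) (by positivity)

lemma exists_tendsto_hyersSeq [CompleteSpace E] {c : 𝕜} (hc : c ≠ 0) {f : E → E} {δ : E → ℝ}
    (hδ : ∀ a, ‖c • f a - f (c • a)‖ ≤ δ (c • a))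
    (hsum : ∀ a, Summable fun n : ℕ => ‖c ^ (n + 1)‖⁻¹ * δ (c ^ (n + 1) • a)) :
    ∃ D : E → E, ∀ a, Tendsto (fun n => hyersSeq c f n a) atTop (𝓝 (D a)) ∧
      ‖f a - D a‖ ≤ ∑' n : ℕ, ‖c ^ (n + 1)‖⁻¹ * δ (c ^ (n + 1) • a) := by
  have hdist a := fun n => dist_hyersSeq_succ_le hc hδ n a
  choose D hD using fun a =>
    cauchySeq_tendsto_of_complete (cauchySeq_of_dist_le_of_summable _ (hdist a) (hsum a))
  refine ⟨D, fun a => ⟨hD a, ?_⟩⟩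
  simpa only [hyersSeq_zero, dist_eq_norm] using
    dist_le_tsum_of_dist_le_of_tendsto₀ _ (hdist a) (hsum a) (hD a)

lemma tendsto_norm_pow_inv_mul_tsum_tail (c : 𝕜) (δ : E → ℝ) (a : E) :
    Tendsto (fun n : ℕ => ‖c ^ n‖⁻¹ * ∑' k : ℕ, ‖c ^ (k + 1)‖⁻¹ * δ (c ^ (k + 1) • c ^ n • a))
      atTop (𝓝 0) := by
  refine ((tendsto_sum_nat_add fun k => ‖c ^ k‖⁻¹ * δ (c ^ k • a)).comp
    (tendsto_add_atTop_nat 1)).congr fun n => ?_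
  rw [Function.comp_apply, ← tsum_mul_left]
  refine tsum_congr fun k => ?_
  rw [smul_smul, ← pow_add, ← mul_assoc, ← mul_inv, ← norm_mul, ← pow_add,
    show n + (k + 1) = k + (n + 1) by omega, show k + 1 + n = k + (n + 1) by omega]

lemma eq_of_norm_sub_le_tsum {c : 𝕜} (hc : c ≠ 0) {f D D' : E → E} {δ : E → ℝ}
    (hD : ∀ (n : ℕ) a, D (c ^ n • a) = c ^ n • D a)
    (hD' : ∀ (n : ℕ) a, D' (c ^ n • a) = c ^ n • D' a)
    (hfD : ∀ a, ‖f a - D a‖ ≤ ∑' n : ℕ, ‖c ^ (n + 1)‖⁻¹ * δ (c ^ (n + 1) • a))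
    (hfD' : ∀ a, ‖f a - D' a‖ ≤ ∑' n : ℕ, ‖c ^ (n + 1)‖⁻¹ * δ (c ^ (n + 1) • a)) :
    D = D' := by
  funext a
  rw [← sub_eq_zero, ← norm_le_zero_iff]
  have htail := (tendsto_norm_pow_inv_mul_tsum_tail c δ a).const_mul 2
  rw [mul_zero] at htail
  refine ge_of_tendsto' htail fun n => ?_
  have hrescale : D a - D' a =
      (c ^ n)⁻¹ • ((f (c ^ n • a) - D' (c ^ n • a)) - (f (c ^ n • a) - D (c ^ n • a))) := by
    rw [sub_sub_sub_cancel_left, hD, hD', ← smul_sub, inv_smul_smul₀ (pow_ne_zero _ hc)]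
  rw [hrescale, norm_smul, norm_inv, two_mul, ← mul_add]
  exact mul_le_mul_of_nonneg_left (norm_sub_le_of_le (hfD' _) (hfD _)) (by positivity)

end Hyers

section Jensen

variable {𝕜 E : Type*} [NormedField 𝕜] [NormedAddCommGroup E] [NormedSpace 𝕜 E]

def genJensenDefect (c : 𝕜) (f : E → E) (μ : 𝕜) (a b : E) : E :=
  (c * μ) • f (c⁻¹ • (a + b)) + (c * μ) • f (c⁻¹ • (a - b)) - (2 : 𝕜) • f (μ • a)

lemma genJensenDefect_one_smul_zero {c : 𝕜} (hc : c ≠ 0) (f : E → E) (a : E) :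
    genJensenDefect c f 1 (c • a) 0 = (2 : 𝕜) • (c • f a - f (c • a)) := by
  simp only [genJensenDefect, add_zero, sub_zero, mul_one, one_smul, inv_smul_smul₀ hc]
  module

lemma hyersSeq_genJensen_eq {c : 𝕜} (hc : c ≠ 0) (f : E → E) (μ : 𝕜) (a b : E) (n : ℕ) :
    μ • hyersSeq c f n (a + b) + μ • hyersSeq c f n (a - b) -
        (2 : 𝕜) • hyersSeq c f (n + 1) (μ • a) =
      (c ^ (n + 1))⁻¹ • genJensenDefect c f μ (c ^ (n + 1) • a) (c ^ (n + 1) • b) := by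
  have hpow : c⁻¹ * c ^ (n + 1) = c ^ n := by rw [pow_succ', inv_mul_cancel_left₀ hc]
  simp only [genJensenDefect, hyersSeq, ← smul_add, ← smul_sub, smul_smul, hpow,
    smul_comm μ (c ^ (n + 1)) a]
  match_scalars <;> field_simp <;> ring

lemma genJensen_of_tendsto_hyersSeq {c : 𝕜} (hc : c ≠ 0) {f D : E → E}
    (hD : ∀ a, Tendsto (fun n => hyersSeq c f n a) atTop (𝓝 (D a))) {μ : 𝕜} {ψ : E → E → ℝ}
    (hJ : ∀ a b, ‖genJensenDefect c f μ a b‖ ≤ ψ a b) {a b : E}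
    (hψ : Tendsto (fun n : ℕ => ‖c ^ n‖⁻¹ * ψ (c ^ n • a) (c ^ n • b)) atTop (𝓝 0)) :
    μ • D (a + b) + μ • D (a - b) = (2 : 𝕜) • D (μ • a) := by
  rw [← sub_eq_zero]
  have hlim := (((hD (a + b)).const_smul μ).add ((hD (a - b)).const_smul μ)).sub
    (((hD (μ • a)).comp (tendsto_add_atTop_nat 1)).const_smul (2 : 𝕜))
  refine tendsto_nhds_unique hlim
    (squeeze_zero_norm (fun n => ?_) (hψ.comp (tendsto_add_atTop_nat 1)))
  rw [Function.comp_apply, hyersSeq_genJensen_eq hc, norm_smul, norm_inv]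
  exact mul_le_mul_of_nonneg_left (hJ _ _) (by positivity)

end Jensen

lemma norm_smul_sub_le_of_genJensen {𝕜 E : Type*} [RCLike 𝕜] [NormedAddCommGroup E]
    [NormedSpace 𝕜 E] {c : 𝕜} (hc : c ≠ 0) {f : E → E} {ψ : E → ℝ}
    (hJ : ∀ a, ‖genJensenDefect c f 1 a 0‖ ≤ ψ a) (a : E) :
    ‖c • f a - f (c • a)‖ ≤ 2⁻¹ * ψ (c • a) := by
  have h := hJ (c • a)
  rw [genJensenDefect_one_smul_zero hc, norm_smul, RCLike.norm_ofNat] at h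
  linarith

lemma Complex.exists_norm_eq_one_add_eq {w : ℂ} (hw : ‖w‖ ≤ 2) :
    ∃ μ₁ μ₂ : ℂ, ‖μ₁‖ = 1 ∧ ‖μ₂‖ = 1 ∧ μ₁ + μ₂ = w := by
  set θ := Real.arccos (‖w‖ / 2)
  have hcos : Real.cos θ = ‖w‖ / 2 :=
    Real.cos_arccos (by linarith [norm_nonneg w]) (by linarith)
  refine ⟨exp (↑(arg w + θ) * I), exp (↑(arg w - θ) * I), norm_exp_ofReal_mul_I _,
    norm_exp_ofReal_mul_I _, ?_⟩
  have h2cos : exp (θ * I) + exp (-θ * I) = 2 * Real.cos θ := by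
    rw [ofReal_cos, Complex.cos]
    ring
  conv_rhs => rw [← norm_mul_exp_arg_mul_I w]
  calc exp (↑(arg w + θ) * I) + exp (↑(arg w - θ) * I)
      = exp (arg w * I) * (exp (θ * I) + exp (-θ * I)) := by
        rw [mul_add, ← exp_add, ← exp_add]
        congr 2 <;> push_cast <;> ring
    _ = ‖w‖ * exp (arg w * I) := by
        rw [h2cos, hcos]
        push_cast
        ring

lemma map_smul_of_map_add_of_map_unimodular_smul {E F : Type*} [AddCommGroup E] [Module ℂ E]
    [AddCommGroup F] [Module ℂ F] {D : E → F} (hadd : ∀ a b, D (a + b) = D a + D b)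
    (hunit : ∀ μ : ℂ, ‖μ‖ = 1 → ∀ a, D (μ • a) = μ • D a) (z : ℂ) (a : E) :
    D (z • a) = z • D a := by
  obtain ⟨m, hm, hzm⟩ : ∃ m : ℕ, 0 < m ∧ ‖z‖ ≤ 2 * m :=
    ⟨⌈‖z‖⌉₊ + 1, by omega, by push_cast; linarith [Nat.le_ceil ‖z‖, norm_nonneg z]⟩
  have hm' : (m : ℂ) ≠ 0 := Nat.cast_ne_zero.mpr hm.ne'
  obtain ⟨μ₁, μ₂, h₁, h₂, hμ⟩ := Complex.exists_norm_eq_one_add_eq (w := z / m) (by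
    rw [norm_div, Complex.norm_natCast, div_le_iff₀ (by positivity)]
    exact hzm)
  have hz : z = m * (μ₁ + μ₂) := by rw [hμ, mul_div_cancel₀ _ hm']
  calc D (z • a) = D (m • (μ₁ • a + μ₂ • a)) := by
        rw [hz, mul_smul, add_smul, Nat.cast_smul_eq_nsmul]
    _ = m • (D (μ₁ • a) + D (μ₂ • a)) := by
        rw [← hadd]
        exact map_nsmul (AddMonoidHom.mk' D hadd) m _
    _ = z • D a := by
        rw [hunit μ₁ h₁, hunit μ₂ h₂, ← add_smul, ← Nat.cast_smul_eq_nsmul ℂ, smul_smul, hz]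

lemma isLinearMap_of_genJensen {E F : Type*} [AddCommGroup E] [Module ℂ E]
    [AddCommGroup F] [Module ℂ F] {D : E → F} (hD0 : D 0 = 0)
    (hJ : ∀ μ : ℂ, ‖μ‖ = 1 → ∀ a b, μ • D (a + b) + μ • D (a - b) = (2 : ℂ) • D (μ • a)) :
    IsLinearMap ℂ D := by
  have hdouble (x : E) : D ((2 : ℂ) • x) = (2 : ℂ) • D x := by
    simpa [two_smul, hD0] using hJ 1 norm_one x x
  have hadd (u v : E) : D (u + v) = D u + D v := by
    have h := hJ 1 norm_one ((2 : ℂ)⁻¹ • (u + v)) ((2 : ℂ)⁻¹ • (u - v))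
    have hu : (2 : ℂ)⁻¹ • (u + v) + (2 : ℂ)⁻¹ • (u - v) = u := by module
    have hv : (2 : ℂ)⁻¹ • (u + v) - (2 : ℂ)⁻¹ • (u - v) = v := by module
    rw [one_smul, one_smul, one_smul, ← hdouble, smul_inv_smul₀ two_ne_zero, hu, hv] at h
    exact h.symm
  have hunit (μ : ℂ) (hμ : ‖μ‖ = 1) (a : E) : D (μ • a) = μ • D a := by
    have h := hJ μ hμ a 0
    rw [add_zero, sub_zero, ← two_smul ℂ] at h
    exact (smul_right_injective F two_ne_zero h).symm
  exact ⟨hadd, map_smul_of_map_add_of_map_unimodular_smul hadd hunit⟩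

noncomputable def cubeDeriv (c x : H →L[ℂ] K) : H →L[ℂ] K :=
  (x ∘L adjoint c) ∘L c + (c ∘L adjoint x) ∘L c + (c ∘L adjoint c) ∘L x

noncomputable def derivationDefect (𝒜 : Submodule ℂ (H →L[ℂ] K)) (hA : JStarClosed 𝒜)
    (g : 𝒜 → 𝒜) (c : 𝒜) : H →L[ℂ] K :=
  (g (cube 𝒜 hA c) : H →L[ℂ] K) - cubeDeriv (c : H →L[ℂ] K) (g c)

lemma adjoint_ofReal_smul (t : ℝ) (x : H →L[ℂ] K) :
    adjoint ((t : ℂ) • x) = (t : ℂ) • adjoint x := by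
  rw [map_smulₛₗ, Complex.conj_ofReal]

lemma continuous_cubeDeriv (c : H →L[ℂ] K) : Continuous (cubeDeriv c) := by
  unfold cubeDeriv
  have := (adjoint : (H →L[ℂ] K) ≃ₗᵢ⋆[ℂ] (K →L[ℂ] H)).continuous
  fun_prop

lemma cubeDeriv_ofReal_smul_left (t : ℝ) (c x : H →L[ℂ] K) :
    cubeDeriv ((t : ℂ) • c) x = (t : ℂ) ^ 2 • cubeDeriv c x := by
  simp only [cubeDeriv, adjoint_ofReal_smul, smul_comp, comp_smul, smul_add, smul_smul]
  ring_nf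

lemma cubeDeriv_ofReal_smul_right (t : ℝ) (c x : H →L[ℂ] K) :
    cubeDeriv c ((t : ℂ) • x) = (t : ℂ) • cubeDeriv c x := by
  simp only [cubeDeriv, adjoint_ofReal_smul, smul_comp, comp_smul, smul_add]

lemma cube_ofReal_smul (𝒜 : Submodule ℂ (H →L[ℂ] K)) (hA : JStarClosed 𝒜) (t : ℝ) (c : 𝒜) :
    cube 𝒜 hA ((t : ℂ) • c) = (t : ℂ) ^ 3 • cube 𝒜 hA c := by
  ext1
  simp only [cube, Submodule.coe_smul, adjoint_ofReal_smul, smul_comp, comp_smul, smul_smul]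
  ring_nf

lemma jensenDefect_eq_add (𝒜 : Submodule ℂ (H →L[ℂ] K)) (hA : JStarClosed 𝒜) (r : ℝ)
    (f : 𝒜 → 𝒜) (μ : ℂ) (a b c : 𝒜) :
    jensenDefect 𝒜 hA r f μ a b c =
      ((genJensenDefect (r : ℂ) f μ a b : 𝒜) : H →L[ℂ] K) + derivationDefect 𝒜 hA f c := by
  simp only [jensenDefect, genJensenDefect, derivationDefect, cubeDeriv, Submodule.coe_add,
    Submodule.coe_sub, Submodule.coe_smul]
  abel

lemma jensenDefect_zero_right (𝒜 : Submodule ℂ (H →L[ℂ] K)) (hA : JStarClosed 𝒜) (r : ℝ)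
    {f : 𝒜 → 𝒜} (hf : f 0 = 0) (μ : ℂ) (a b : 𝒜) :
    jensenDefect 𝒜 hA r f μ a b 0 = ((genJensenDefect (r : ℂ) f μ a b : 𝒜) : H →L[ℂ] K) := by
  have hcube : cube 𝒜 hA 0 = 0 := by
    ext1
    simp [cube]
  simp [jensenDefect_eq_add, derivationDefect, cubeDeriv, hcube, hf]

lemma jensenDefect_one_zero_zero (𝒜 : Submodule ℂ (H →L[ℂ] K)) (hA : JStarClosed 𝒜) (r : ℝ)
    {f : 𝒜 → 𝒜} (hf : f 0 = 0) (c : 𝒜) :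
    jensenDefect 𝒜 hA r f 1 0 0 c = derivationDefect 𝒜 hA f c := by
  simp [jensenDefect_eq_add, genJensenDefect, hf]

lemma hyersSeq_cube_sub_cubeDeriv (𝒜 : Submodule ℂ (H →L[ℂ] K)) (hA : JStarClosed 𝒜) {r : ℝ}
    (hr : r ≠ 0) (f : 𝒜 → 𝒜) (c : 𝒜) (n : ℕ) :
    ((hyersSeq (r : ℂ) f (3 * n) (cube 𝒜 hA c) : 𝒜) : H →L[ℂ] K) -
        cubeDeriv (c : H →L[ℂ] K) ((hyersSeq (r : ℂ) f n c : 𝒜) : H →L[ℂ] K) =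
      ((r : ℂ) ^ (3 * n))⁻¹ • derivationDefect 𝒜 hA f ((r : ℂ) ^ n • c) := by
  have hcube : cube 𝒜 hA ((r : ℂ) ^ n • c) = (r : ℂ) ^ (3 * n) • cube 𝒜 hA c := by
    rw [← Complex.ofReal_pow, cube_ofReal_smul, Complex.ofReal_pow, ← pow_mul, mul_comm]
  have hleft (y : H →L[ℂ] K) :
      cubeDeriv ((r : ℂ) ^ n • (c : H →L[ℂ] K)) y = (r : ℂ) ^ (2 * n) • cubeDeriv c y := by
    rw [← Complex.ofReal_pow, cubeDeriv_ofReal_smul_left, Complex.ofReal_pow, ← pow_mul, mul_comm]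
  have hright (y : H →L[ℂ] K) :
      cubeDeriv c (((r : ℂ) ^ n)⁻¹ • y) = ((r : ℂ) ^ n)⁻¹ • cubeDeriv c y := by
    rw [← Complex.ofReal_pow, ← Complex.ofReal_inv, cubeDeriv_ofReal_smul_right]
  have hr' : (r : ℂ) ≠ 0 := Complex.ofReal_ne_zero.mpr hr
  simp only [derivationDefect, hcube, hyersSeq, Submodule.coe_smul, hleft, hright, smul_sub,
    smul_smul]
  congr 2
  field_simp
  ring

lemma derivationDefect_eq_zero_of_tendsto (𝒜 : Submodule ℂ (H →L[ℂ] K)) (hA : JStarClosed 𝒜)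
    {r : ℝ} (hr : 1 ≤ r) {f D : 𝒜 → 𝒜}
    (hD : ∀ a, Tendsto (fun n => hyersSeq (r : ℂ) f n a) atTop (𝓝 (D a))) {φ : 𝒜 → ℝ}
    (hf : ∀ c, ‖derivationDefect 𝒜 hA f c‖ ≤ φ c) {c : 𝒜}
    (hφ : Tendsto (fun n : ℕ => ‖(r : ℂ) ^ n‖⁻¹ * φ ((r : ℂ) ^ n • c)) atTop (𝓝 0)) :
    derivationDefect 𝒜 hA D c = 0 := by
  have h3n : Tendsto (fun n : ℕ => 3 * n) atTop atTop :=
    tendsto_atTop_mono (fun n => Nat.le_mul_of_pos_left n three_pos) tendsto_id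
  have hlim : Tendsto (fun n => ((hyersSeq (r : ℂ) f (3 * n) (cube 𝒜 hA c) : 𝒜) : H →L[ℂ] K) -
      cubeDeriv (c : H →L[ℂ] K) ((hyersSeq (r : ℂ) f n c : 𝒜) : H →L[ℂ] K)) atTop
      (𝓝 (derivationDefect 𝒜 hA D c)) :=
    ((continuous_subtype_val.tendsto _).comp ((hD _).comp h3n)).sub
      ((continuous_cubeDeriv _).tendsto _ |>.comp ((continuous_subtype_val.tendsto _).comp (hD c)))
  have hnorm (n : ℕ) : ‖((r : ℂ) ^ (3 * n))⁻¹‖ ≤ ‖(r : ℂ) ^ n‖⁻¹ := by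
    rw [norm_inv, norm_pow, norm_pow, Complex.norm_real, Real.norm_of_nonneg (by linarith)]
    exact inv_anti₀ (pow_pos (by linarith) n) (pow_le_pow_right₀ hr (by omega))
  refine tendsto_nhds_unique hlim (squeeze_zero_norm (fun n => ?_) hφ)
  rw [hyersSeq_cube_sub_cubeDeriv 𝒜 hA (by linarith) f c n, norm_smul]
  exact mul_le_mul (hnorm n) (hf _) (norm_nonneg _) (by positivity)


theorem stability_JStarDerivation_general
    (𝒜 : Submodule ℂ (H →L[ℂ] K)) (hclosed : IsClosed (𝒜 : Set (H →L[ℂ] K)))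
    (hA : JStarClosed 𝒜)
    (r : ℝ) (hr : 1 < r)
    (f : 𝒜 → 𝒜) (hf0 : f 0 = 0)
    (φ : 𝒜 → 𝒜 → 𝒜 → ℝ)
    (hsum : ∀ a b c : 𝒜, Summable
      (fun n : ℕ => (r ^ n)⁻¹ * φ (((r : ℂ) ^ n) • a) (((r : ℂ) ^ n) • b) (((r : ℂ) ^ n) • c)))
    (hineq : ∀ (μ : ℂ), ‖μ‖ = 1 → ∀ a b c : 𝒜, ‖jensenDefect 𝒜 hA r f μ a b c‖ ≤ φ a b c) :
    ∃ D : 𝒜 → 𝒜,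
      (IsJStarDerivation 𝒜 hA D ∧
        (∀ a : 𝒜, ‖f a - D a‖ ≤
          (1 / 2) * ∑' n : ℕ, (r ^ (n + 1))⁻¹ * φ (((r : ℂ) ^ (n + 1)) • a) 0 0) ∧
        (∀ a : 𝒜, Tendsto (fun n : ℕ => ((r : ℂ) ^ n)⁻¹ • f (((r : ℂ) ^ n) • a))
          atTop (nhds (D a)))) ∧
      (∀ D' : 𝒜 → 𝒜,
        (IsJStarDerivation 𝒜 hA D' ∧
          (∀ a : 𝒜, ‖f a - D' a‖ ≤
            (1 / 2) * ∑' n : ℕ, (r ^ (n + 1))⁻¹ * φ (((r : ℂ) ^ (n + 1)) • a) 0 0)) → D' = D) := by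
  have : CompleteSpace 𝒜 := hclosed.completeSpace_coe
  have hr0 : (r : ℂ) ≠ 0 := Complex.ofReal_ne_zero.mpr (by linarith)
  have hnorm (n : ℕ) : ‖(r : ℂ) ^ n‖ = r ^ n := by
    rw [norm_pow, Complex.norm_real, Real.norm_of_nonneg (by linarith)]
  have hsum' (a b c : 𝒜) := by simpa only [← hnorm] using hsum a b c
  have hJ (μ : ℂ) (hμ : ‖μ‖ = 1) (a b : 𝒜) : ‖genJensenDefect (r : ℂ) f μ a b‖ ≤ φ a b 0 := by
    have h := hineq μ hμ a b 0
    rwa [jensenDefect_zero_right 𝒜 hA r hf0] at h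
  have hder (c : 𝒜) : ‖derivationDefect 𝒜 hA f c‖ ≤ φ 0 0 c :=
    jensenDefect_one_zero_zero 𝒜 hA r hf0 c ▸ hineq 1 norm_one 0 0 c
  have hsum_shift (a : 𝒜) : Summable fun n : ℕ =>
      ‖(r : ℂ) ^ (n + 1)‖⁻¹ * (2⁻¹ * φ ((r : ℂ) ^ (n + 1) • a) 0 0) := by
    have h := ((summable_nat_add_iff 1).mpr (hsum' a 0 0)).mul_left 2⁻¹
    simp only [smul_zero] at h
    exact h.congr fun n => mul_left_comm _ _ _
  obtain ⟨D, hD⟩ := exists_tendsto_hyersSeq (δ := fun x => 2⁻¹ * φ x 0 0) hr0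
    (norm_smul_sub_le_of_genJensen hr0 fun a => hJ 1 norm_one a 0) hsum_shift
  have hD0 : D 0 = 0 := tendsto_nhds_unique (hD 0).1 (by simp [hyersSeq, hf0])
  obtain ⟨hadd, hsmul⟩ := isLinearMap_of_genJensen hD0 fun μ hμ a b =>
    genJensen_of_tendsto_hyersSeq hr0 (fun a => (hD a).1) (hJ μ hμ)
      (by simpa only [smul_zero] using (hsum' a b 0).tendsto_atTop_zero)
  have hDJ : IsJStarDerivation 𝒜 hA D := ⟨hadd, hsmul, fun c => sub_eq_zero.mp <|
    derivationDefect_eq_zero_of_tendsto 𝒜 hA hr.le (fun a => (hD a).1) hder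
      (by simpa only [smul_zero] using (hsum' 0 0 c).tendsto_atTop_zero)⟩
  have hbound (a : 𝒜) : ∑' n : ℕ, ‖(r : ℂ) ^ (n + 1)‖⁻¹ * (2⁻¹ * φ ((r : ℂ) ^ (n + 1) • a) 0 0) =
      (1 / 2) * ∑' n : ℕ, (r ^ (n + 1))⁻¹ * φ (((r : ℂ) ^ (n + 1)) • a) 0 0 := by
    rw [← tsum_mul_left]
    simp only [hnorm, one_div, mul_left_comm]
  refine ⟨D, ⟨hDJ, fun a => hbound a ▸ (hD a).2, fun a => (hD a).1⟩, ?_⟩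
  rintro D' ⟨hD'J, hD'⟩
  exact eq_of_norm_sub_le_tsum (f := f) (δ := fun x => 2⁻¹ * φ x 0 0) hr0
    (fun n a => hD'J.2.1 _ a) (fun n a => hsmul _ a) (fun a => (hbound a).symm ▸ hD' a)
    (fun a => (hD a).2)

/-- Theorem 2.2 (stability of `J*`-derivations): if `f(0) = 0`, the series
`Σ r⁻ⁿ φ(rⁿa, rⁿb, rⁿc)` converges and the Jensen/`J*` defect of `f` is controlled by `φ`,
then there is a unique `J*`-derivation `D` with
`‖f(a) − D(a)‖ ≤ (1/2) Σ_{n≥1} r⁻ⁿ φ(rⁿa, 0, 0)`, given by `D(a) = lim r⁻ⁿ f(rⁿa)`. -/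
theorem stability_JStarDerivation
    (𝒜 : Submodule ℂ (H →L[ℂ] K)) (hclosed : IsClosed (𝒜 : Set (H →L[ℂ] K)))
    (hA : JStarClosed 𝒜)
    (r : ℝ) (hr : 1 < r)
    (f : 𝒜 → 𝒜) (hf0 : f 0 = 0)
    (φ : 𝒜 → 𝒜 → 𝒜 → ℝ) (hφ0 : ∀ a b c : 𝒜, 0 ≤ φ a b c)
    (hsum : ∀ a b c : 𝒜, Summable
      (fun n : ℕ => (r ^ n)⁻¹ * φ (((r : ℂ) ^ n) • a) (((r : ℂ) ^ n) • b) (((r : ℂ) ^ n) • c)))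
    (hineq : ∀ (μ : ℂ), ‖μ‖ = 1 → ∀ a b c : 𝒜, ‖jensenDefect 𝒜 hA r f μ a b c‖ ≤ φ a b c) :
    ∃ D : 𝒜 → 𝒜,
      (IsJStarDerivation 𝒜 hA D ∧
        (∀ a : 𝒜, ‖f a - D a‖ ≤
          (1 / 2) * ∑' n : ℕ, (r ^ (n + 1))⁻¹ * φ (((r : ℂ) ^ (n + 1)) • a) 0 0) ∧
        (∀ a : 𝒜, Tendsto (fun n : ℕ => ((r : ℂ) ^ n)⁻¹ • f (((r : ℂ) ^ n) • a))
          atTop (nhds (D a)))) ∧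
      (∀ D' : 𝒜 → 𝒜,
        (IsJStarDerivation 𝒜 hA D' ∧
          (∀ a : 𝒜, ‖f a - D' a‖ ≤
            (1 / 2) * ∑' n : ℕ, (r ^ (n + 1))⁻¹ * φ (((r : ℂ) ^ (n + 1)) • a) 0 0)) → D' = D) :=
  stability_JStarDerivation_general 𝒜 hclosed hA r hr f hf0 φ hsum hineq
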